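/- In the partition graphs, an 8-clique first appears at n = 29, a 9-clique first at n = 37, a 10-clique first at n = 46, and an 11-clique first at n = 56; that is, c_8(28) = 0 and c_8(29) > 0, c_9(36) = 0 and c_9(37) > 0, c_10(45) = 0 and c_10(46) > 0, and c_11(55) = 0 and c_11(56) > 0. -/

import Mathlib

/-!
A partition of `n` is encoded by its Young diagram, an `n`-cell lower set of `ℕ × ℕ`, and
adjacent partitions have diagrams meeting in `n - 1` cells. In a family of `n`-sets pairwise
meeting in `n - 1` elements, either all members contain a common `(n - 1)`-set `Q` or all lie in
a common `(n + 1)`-set `U`. In the first case the cells completing `Q` to the diagrams form an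
antichain, hence lie in distinct rows and columns, and the column segments below them are
disjoint subsets of `Q`; this gives `C(r, 2) ≤ n - 1`. In the second case the same argument with
the cells missing from `U` gives `C(r, 2) + r ≤ n + 1`. Both fail for `n = C(r, 2)` once `r ≥ 3`,
while adding a cell to each of the `r` corners of the staircase `(r - 1, …, 1)` gives an
`r`-clique in `G_{C(r, 2) + 1}`; the claims are the cases `r = 8, 9, 10, 11`.
-/

/-- `nu` is obtained from `lam` by decreasing a single part by 1
(deleting the part if it becomes 0). -/
def stepDown {n : ℕ} (lam : Nat.Partition n) (nu : Nat.Partition (n - 1)) : Prop :=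
  ∃ k ∈ lam.parts, nu.parts = Multiset.filter (· ≠ 0) ((k - 1) ::ₘ lam.parts.erase k)

/-- The partition graph `G_n`: vertices are the integer partitions of `n`, and two
distinct partitions are adjacent iff some partition of `n - 1` is obtained from
each of them by decreasing a single part by 1 (an elementary transfer of one cell). -/
def partitionGraph (n : ℕ) : SimpleGraph (Nat.Partition n) where
  Adj lam mu := lam ≠ mu ∧ ∃ nu : Nat.Partition (n - 1), stepDown lam nu ∧ stepDown mu nu
  symm := by
    constructor
    rintro a b ⟨hne, nu, ha, hb⟩
    exact ⟨hne.symm, nu, hb, ha⟩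
  loopless := by
    constructor
    rintro a ⟨hne, _⟩
    exact hne rfl

/-- `cliqueCount n r = c_r(n)`, the number of cliques of size `r` in `G_n`. -/
noncomputable def cliqueCount (n r : ℕ) : ℕ :=
  Set.ncard {s : Finset (Nat.Partition n) | (partitionGraph n).IsNClique r s}

open Finset

section FamilyOfSets

variable {α ι : Type*} [DecidableEq α]

lemma subset_union_of_not_inter_subset {A B C : Finset α}
    (hA : #(C ∩ A) = #(A ∩ B)) (hB : #(C ∩ B) = #(A ∩ B)) (hC : #C ≤ #(A ∩ B) + 1)
    (h : ¬ A ∩ B ⊆ C) : C ⊆ A ∪ B := by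
  have hlt : #(C ∩ (A ∩ B)) < #(A ∩ B) :=
    card_lt_card ⟨inter_subset_right, fun h' => h (h'.trans inter_subset_left)⟩
  have hsum : #(C ∩ (A ∪ B)) + #(C ∩ (A ∩ B)) = #(C ∩ A) + #(C ∩ B) := by
    rw [inter_union_distrib_left, ← card_union_add_card_inter (C ∩ A), inter_inter_distrib_left]
  have : C ∩ (A ∪ B) = C := eq_of_subset_of_card_le inter_subset_left (by omega)
  exact this ▸ inter_subset_right

lemma card_inter_lt_of_subset_union {Q U C D : Finset α} (hQU : Q ⊆ U) (hQD : Q ⊆ D)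
    (hD : #D ≤ #Q + 1) (hDU : ¬ D ⊆ U) (hCU : C ⊆ U) (hQC : ¬ Q ⊆ C) :
    #(C ∩ D) < #Q := by
  have hDU' : D ∩ U = Q := by
    have : #(D ∩ U) < #D :=
      card_lt_card ⟨inter_subset_left, fun h => hDU (h.trans inter_subset_right)⟩
    exact (eq_of_subset_of_card_le (subset_inter hQD hQU) (by omega)).symm
  calc #(C ∩ D) ≤ #(Q ∩ C) := card_le_card fun x hx => by
        rw [mem_inter] at hx ⊢
        exact ⟨hDU' ▸ mem_inter.2 ⟨hx.2, hCU hx.1⟩, hx.1⟩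
    _ < #Q := card_lt_card ⟨inter_subset_left, fun h => hQC (h.trans inter_subset_right)⟩

theorem forall_inter_subset_or_forall_subset_union {s : Finset ι} {D : ι → Finset α} {n : ℕ}
    (hcard : ∀ i ∈ s, #(D i) = n) (hinter : ∀ i ∈ s, ∀ j ∈ s, i ≠ j → #(D i ∩ D j) + 1 = n)
    {a b : ι} (ha : a ∈ s) (hb : b ∈ s) (hab : a ≠ b) :
    (∀ i ∈ s, D a ∩ D b ⊆ D i) ∨ (∀ i ∈ s, D i ⊆ D a ∪ D b) := by
  have hQ := hinter a ha b hb hab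
  have key : ∀ i ∈ s, D a ∩ D b ⊆ D i ∨ D i ⊆ D a ∪ D b := by
    intro i hi
    by_cases hia : i = a
    · exact .inl (hia ▸ inter_subset_left)
    by_cases hib : i = b
    · exact .inl (hib ▸ inter_subset_right)
    refine or_iff_not_imp_left.2 (subset_union_of_not_inter_subset ?_ ?_ ?_)
    · have := hinter i hi a ha hia; omega
    · have := hinter i hi b hb hib; omega
    · have := hcard i hi; omega
  by_contra! ⟨⟨c, hc, hQc⟩, ⟨d, hd, hdU⟩⟩
  have hcd : c ≠ d := by
    rintro rfl
    exact ((key c hc).resolve_left hQc |> hdU)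
  have := card_inter_lt_of_subset_union (inter_subset_union) ((key d hd).resolve_right hdU)
    (by have := hcard d hd; omega) hdU ((key c hc).resolve_left hQc) hQc
  have := hinter c hc d hd hcd
  omega

end FamilyOfSets

section Cells

variable {ι : Type*} {s : Finset ι}

lemma card_biUnion_range_product_singleton {col : ι → ℕ} (hcol : Set.InjOn col s)
    (len : ι → ℕ) : #(s.biUnion fun i => range (len i) ×ˢ {col i}) = ∑ i ∈ s, len i := by
  rw [card_biUnion]
  · simp
  · intro i hi j hj hij
    simp only [Function.onFun, disjoint_left, mem_product, mem_singleton]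
    exact fun p hpi hpj => hij (hcol hi hj (hpi.2.symm.trans hpj.2))

lemma sum_le_card_of_segments_subset {col len : ι → ℕ} (hcol : Set.InjOn col s)
    {S : Finset (ℕ × ℕ)} (hS : ∀ i ∈ s, ∀ r < len i, (r, col i) ∈ S) :
    ∑ i ∈ s, len i ≤ #S := by
  rw [← card_biUnion_range_product_singleton hcol]
  refine card_le_card fun p hp => ?_
  simp only [mem_biUnion, mem_product, mem_range, mem_singleton] at hp
  obtain ⟨i, hi, hp1, hp2⟩ := hp
  simpa [← hp2] using hS i hi p.1 hp1

lemma choose_two_card_le_sum (A : Finset ℕ) : (#A).choose 2 ≤ ∑ x ∈ A, x := by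
  induction A using induction_on_max with
  | empty => simp
  | insert a A hlt ih =>
    have hA : #A ≤ a := by simpa using card_le_card fun x hx => mem_range.2 (hlt x hx)
    have hchoose : (#A + 1).choose 2 = (#A).choose 2 + #A := by
      simp [Nat.choose_succ_succ', add_comm]
    rw [card_insert_of_notMem fun ha => (hlt a ha).false, sum_insert fun ha => (hlt a ha).false,
      hchoose]
    omega

lemma choose_two_card_le_sum_of_injOn {f : ι → ℕ} (hf : Set.InjOn f s) :
    (#s).choose 2 ≤ ∑ i ∈ s, f i := by
  classical
  simpa [card_image_of_injOn hf, sum_image hf] using choose_two_card_le_sum (s.image f)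

/-- Cells `y i` forming an antichain lie in distinct rows and columns, which forces the
column segments below them to have at least `0 + 1 + ⋯ + (#s - 1)` cells. -/
lemma choose_two_card_add_mul_le_card {y : ι → ℕ × ℕ} (hy : ∀ i ∈ s, ∀ j ∈ s, y i ≤ y j → i = j)
    (k : ℕ) {S : Finset (ℕ × ℕ)} (hS : ∀ i ∈ s, ∀ r < (y i).1 + k, (r, (y i).2) ∈ S) :
    (#s).choose 2 + k * #s ≤ #S := by
  have hrow : Set.InjOn (fun i => (y i).1) s := by
    intro i hi j hj h
    rcases le_total (y i).2 (y j).2 with h' | h'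
    · exact hy i hi j hj (Prod.le_def.2 ⟨h.le, h'⟩)
    · exact (hy j hj i hi (Prod.le_def.2 ⟨h.ge, h'⟩)).symm
  have hcol : Set.InjOn (fun i => (y i).2) s := by
    intro i hi j hj h
    rcases le_total (y i).1 (y j).1 with h' | h'
    · exact hy i hi j hj (Prod.le_def.2 ⟨h', h.le⟩)
    · exact (hy j hj i hi (Prod.le_def.2 ⟨h', h.ge⟩)).symm
  calc (#s).choose 2 + k * #s ≤ ∑ i ∈ s, (y i).1 + ∑ i ∈ s, k := by
        simpa [mul_comm] using choose_two_card_le_sum_of_injOn hrow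
    _ = ∑ i ∈ s, ((y i).1 + k) := sum_add_distrib.symm
    _ ≤ #S := sum_le_card_of_segments_subset hcol hS

variable {D : ι → Finset (ℕ × ℕ)}

theorem choose_two_card_le_card_of_forall_subset (hD : ∀ i ∈ s, IsLowerSet (D i : Set (ℕ × ℕ)))
    (hinj : Set.InjOn D s) {Q : Finset (ℕ × ℕ)} (hQ : ∀ i ∈ s, Q ⊆ D i ∧ #Q + 1 = #(D i)) :
    (#s).choose 2 ≤ #Q := by
  choose! y hyQ hy using fun i hi => exists_eq_insert_iff.2 (hQ i hi)
  have hyD : ∀ i ∈ s, y i ∈ D i := fun i hi => hy i hi ▸ mem_insert_self _ _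
  have hantichain : ∀ i ∈ s, ∀ j ∈ s, y i ≤ y j → i = j := by
    intro i hi j hj hij
    rcases mem_insert.1 (hy j hj ▸ hD j hj hij (hyD j hj)) with h | h
    · exact hinj hi hj (by rw [← hy i hi, ← hy j hj, h])
    · exact absurd h (hyQ i hi)
  simpa using choose_two_card_add_mul_le_card hantichain 0 fun i hi r hr => by
    have hle : (r, (y i).2) ≤ y i := Prod.le_def.2 ⟨by omega, le_rfl⟩
    have hne : (r, (y i).2) ≠ y i := fun h => by rw [← h] at hr; omega
    exact (mem_insert.1 (hy i hi ▸ hD i hi hle (hyD i hi))).resolve_left hne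

theorem choose_two_card_add_card_le_card_of_forall_subset
    (hD : ∀ i ∈ s, IsLowerSet (D i : Set (ℕ × ℕ))) (hinj : Set.InjOn D s) (hs : 1 < #s)
    {U : Finset (ℕ × ℕ)} (hU : ∀ i ∈ s, D i ⊆ U ∧ #(D i) + 1 = #U) :
    (#s).choose 2 + #s ≤ #U := by
  choose! y hyD hy using fun i hi => exists_eq_insert_iff.2 (hU i hi)
  have hmem : ∀ i ∈ s, ∀ j ∈ s, i ≠ j → y i ∈ D j := by
    intro i hi j hj hij
    have : y i ∈ insert (y j) (D j) := hy j hj ▸ hy i hi ▸ mem_insert_self _ _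
    refine (mem_insert.1 this).resolve_left fun h => hij (hinj hi hj ?_)
    rw [← erase_insert (hyD i hi), ← erase_insert (hyD j hj), hy i hi, hy j hj, h]
  have hantichain : ∀ i ∈ s, ∀ j ∈ s, y i ≤ y j → i = j := by
    intro i hi j hj hij
    by_contra hne
    exact hyD i hi (hD i hi hij (hmem j hj i hi (Ne.symm hne)))
  simpa using choose_two_card_add_mul_le_card hantichain 1 fun i hi r hr => by
    obtain ⟨j, hj, hji⟩ := exists_mem_ne hs i
    have hle : (r, (y i).2) ≤ y i := Prod.le_def.2 ⟨by omega, le_rfl⟩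
    exact (hU j hj).1 (hD j hj hle (hmem i hi j hj (Ne.symm hji)))

end Cells

lemma Multiset.countP_lt_eq_countP_succ_lt_add_count (s : Multiset ℕ) (j : ℕ) :
    s.countP (j < ·) = s.countP (j + 1 < ·) + s.count (j + 1) := by
  induction s using Multiset.induction_on with
  | empty => simp
  | cons a t ih =>
    rw [Multiset.countP_cons, Multiset.countP_cons, Multiset.count_cons, ih]
    split_ifs <;> omega

lemma Multiset.sum_range_countP_lt {m : ℕ} (s : Multiset ℕ) (hs : ∀ x ∈ s, x ≤ m) :
    ∑ j ∈ Finset.range m, s.countP (j < ·) = s.sum := by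
  induction s using Multiset.induction_on with
  | empty => simp
  | cons a t ih =>
    have ha : ((Finset.range m).filter (· < a)) = Finset.range a := by
      ext j
      have := hs a (Multiset.mem_cons_self a t)
      simp only [Finset.mem_filter, Finset.mem_range]
      omega
    simp only [Multiset.countP_cons, Finset.sum_add_distrib, Multiset.sum_cons, Finset.sum_boole,
      ha, Finset.card_range, ih fun x hx => hs x (Multiset.mem_cons_of_mem hx), Nat.cast_id]
    omega

namespace Nat.Partition

variable {n : ℕ}

/-- The length of column `j` (counted from `0`) of the Young diagram. -/
def colLen (l : Nat.Partition n) (j : ℕ) : ℕ := l.parts.countP (j < ·)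

lemma colLen_antitone (l : Nat.Partition n) : Antitone l.colLen := fun i j hij => by
  simp only [colLen, Multiset.countP_eq_card_filter]
  exact Multiset.card_le_card (Multiset.monotone_filter_right _ fun x hx => hij.trans_lt hx)

lemma colLen_eq_colLen_succ_add_count (l : Nat.Partition n) (j : ℕ) :
    l.colLen j = l.colLen (j + 1) + l.parts.count (j + 1) :=
  l.parts.countP_lt_eq_countP_succ_lt_add_count j

lemma colLen_injective : Function.Injective (colLen : Nat.Partition n → ℕ → ℕ) := by
  intro a b h
  ext k
  cases k with
  | zero =>
    rw [Multiset.count_eq_zero_of_notMem fun h => (a.parts_pos h).false,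
      Multiset.count_eq_zero_of_notMem fun h => (b.parts_pos h).false]
  | succ k =>
    have ha := a.colLen_eq_colLen_succ_add_count k
    have hb := b.colLen_eq_colLen_succ_add_count k
    rw [h] at ha
    omega

lemma sum_range_colLen (l : Nat.Partition n) : ∑ j ∈ range n, l.colLen j = n :=
  (l.parts.sum_range_countP_lt fun _ => le_of_mem_parts).trans l.parts_sum

lemma colLen_le_of_stepDown {l : Nat.Partition n} {ν : Nat.Partition (n - 1)} (h : stepDown l ν)
    (j : ℕ) : ν.colLen j ≤ l.colLen j := by
  obtain ⟨k, hk, hν⟩ := h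
  calc ν.colLen j = ((k - 1) ::ₘ l.parts.erase k).countP (j < ·) := by
        rw [colLen, hν, Multiset.countP_filter]
        exact Multiset.countP_congr rfl fun x _ => by grind
    _ ≤ (k ::ₘ l.parts.erase k).countP (j < ·) := by
        simp only [Multiset.countP_cons]
        split_ifs <;> omega
    _ = l.colLen j := by rw [Multiset.cons_erase hk, colLen]

/-- The Young diagram of `l`: cell `(i, j)` lies in row `i` and column `j`. -/
def diagram (l : Nat.Partition n) : Finset (ℕ × ℕ) :=
  (range n).biUnion fun j => range (l.colLen j) ×ˢ {j}

lemma mem_diagram {l : Nat.Partition n} {p : ℕ × ℕ} : p ∈ l.diagram ↔ p.1 < l.colLen p.2 := by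
  simp only [diagram, mem_biUnion, mem_range, mem_product, mem_singleton]
  constructor
  · rintro ⟨j, -, hp, rfl⟩
    exact hp
  · intro hp
    refine ⟨p.2, ?_, hp, rfl⟩
    by_contra! h
    rw [colLen, Multiset.countP_eq_zero.2 fun x hx => not_lt.2 ((le_of_mem_parts hx).trans h)] at hp
    exact Nat.not_lt_zero _ hp

lemma card_diagram (l : Nat.Partition n) : #l.diagram = n := by
  rw [diagram, card_biUnion_range_product_singleton (col := fun j => j) fun _ _ _ _ h => h,
    sum_range_colLen]

lemma isLowerSet_diagram (l : Nat.Partition n) : IsLowerSet (l.diagram : Set (ℕ × ℕ)) := by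
  intro p q hqp hp
  rw [mem_coe, mem_diagram] at hp ⊢
  exact (Prod.le_def.1 hqp).1.trans_lt (hp.trans_le (l.colLen_antitone (Prod.le_def.1 hqp).2))

lemma diagram_injective : Function.Injective (diagram : Nat.Partition n → Finset (ℕ × ℕ)) := by
  intro a b h
  refine colLen_injective (funext fun j => eq_of_forall_lt_iff fun i => ?_)
  simpa [mem_diagram] using congrArg ((i, j) ∈ ·) h

lemma diagram_subset_of_stepDown {l : Nat.Partition n} {ν : Nat.Partition (n - 1)}
    (h : stepDown l ν) : ν.diagram ⊆ l.diagram := fun p hp =>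
  mem_diagram.2 ((mem_diagram.1 hp).trans_le (colLen_le_of_stepDown h p.2))

lemma card_diagram_inter_add_one_of_adj {a b : Nat.Partition n} (h : (partitionGraph n).Adj a b) :
    #(a.diagram ∩ b.diagram) + 1 = n := by
  obtain ⟨hab, ν, ha, hb⟩ := h
  have hle : n - 1 ≤ #(a.diagram ∩ b.diagram) := by
    simpa [card_diagram] using
      card_le_card (subset_inter (diagram_subset_of_stepDown ha) (diagram_subset_of_stepDown hb))
  have hlt : #(a.diagram ∩ b.diagram) < n := by
    refine (card_lt_card ⟨inter_subset_left, fun h => hab (diagram_injective ?_)⟩).trans_eq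
      (card_diagram a)
    exact eq_of_subset_of_card_le (h.trans inter_subset_right) (by rw [card_diagram, card_diagram])
  omega

/-- Add a cell at the end of a row of length `k` (a new row when `k = 0`). -/
def addCell (ν : Nat.Partition n) (k : ℕ) (hk : k = 0 ∨ k ∈ ν.parts) : Nat.Partition (n + 1) where
  parts := (k + 1) ::ₘ ν.parts.erase k
  parts_pos {i} hi := by
    rcases Multiset.mem_cons.1 hi with rfl | hi
    · exact k.succ_pos
    · exact ν.parts_pos (Multiset.mem_of_mem_erase hi)
  parts_sum := by
    rcases hk with rfl | hk
    · rw [Multiset.erase_of_notMem fun h => (ν.parts_pos h).false, Multiset.sum_cons, ν.parts_sum,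
        add_comm]
    · have := Multiset.sum_erase hk
      have := ν.parts_sum
      rw [Multiset.sum_cons]
      omega

lemma stepDown_addCell (ν : Nat.Partition n) {k : ℕ} (hk : k = 0 ∨ k ∈ ν.parts) :
    stepDown (ν.addCell k hk) ν := by
  refine ⟨k + 1, Multiset.mem_cons_self _ _, ?_⟩
  rw [addCell, Multiset.erase_cons_head, Nat.add_sub_cancel k 1]
  have hν : ν.parts.filter (· ≠ 0) = ν.parts :=
    Multiset.filter_eq_self.2 fun _ ha => (ν.parts_pos ha).ne'
  rcases hk with rfl | hk
  · rw [Multiset.filter_cons_of_neg _ (by simp),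
      Multiset.erase_of_notMem fun h => (ν.parts_pos h).false, hν]
  · rw [Multiset.cons_erase hk, hν]

lemma addCell_injective (ν : Nat.Partition n) {j k : ℕ} {hj : j = 0 ∨ j ∈ ν.parts}
    {hk : k = 0 ∨ k ∈ ν.parts} (h : ν.addCell j hj = ν.addCell k hk) : j = k := by
  by_contra hjk
  -- `j + 1` occurs once more in `ν.addCell j hj` than in `ν`, but not more in `ν.addCell k hk`
  have hcount := congrArg (fun p => p.parts.count (j + 1)) h
  simp only [addCell, Multiset.count_cons_self, Multiset.count_erase_of_ne (by omega : j + 1 ≠ j),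
    Multiset.count_cons_of_ne (by omega : j + 1 ≠ k + 1)] at hcount
  have := Multiset.count_le_of_le (j + 1) (Multiset.erase_le k ν.parts)
  omega

end Nat.Partition

open Nat.Partition in
theorem choose_two_card_lt_or_of_isClique_partitionGraph {n : ℕ} {s : Finset (Nat.Partition n)}
    (hs : (partitionGraph n).IsClique (s : Set (Nat.Partition n))) (h3 : 2 < #s) :
    (#s).choose 2 < n ∨ (#s).choose 2 + #s ≤ n + 1 := by
  obtain ⟨a, ha, b, hb, hab⟩ := one_lt_card.1 (by omega : 1 < #s)
  have hinter : ∀ i ∈ s, ∀ j ∈ s, i ≠ j → #(i.diagram ∩ j.diagram) + 1 = n :=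
    fun i hi j hj hij => card_diagram_inter_add_one_of_adj (hs (mem_coe.2 hi) (mem_coe.2 hj) hij)
  have hQ := hinter a ha b hb hab
  have hU : #(a.diagram ∪ b.diagram) = n + 1 := by
    have := card_union_add_card_inter a.diagram b.diagram
    rw [card_diagram, card_diagram] at this
    omega
  have hlower : ∀ i ∈ s, IsLowerSet (i.diagram : Set (ℕ × ℕ)) := fun i _ => isLowerSet_diagram i
  rcases forall_inter_subset_or_forall_subset_union (fun i _ => card_diagram i) hinter ha hb hab
    with h | h
  · have := choose_two_card_le_card_of_forall_subset hlower diagram_injective.injOn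
      fun i hi => ⟨h i hi, by rw [card_diagram]; omega⟩
    omega
  · have := choose_two_card_add_card_le_card_of_forall_subset hlower diagram_injective.injOn
      (by omega) fun i hi => ⟨h i hi, by rw [card_diagram, hU]⟩
    omega

theorem cliqueFree_partitionGraph_choose_two {r : ℕ} (hr : 3 ≤ r) :
    (partitionGraph (r.choose 2)).CliqueFree r := by
  intro s hs
  have hcard := hs.card_eq
  rcases choose_two_card_lt_or_of_isClique_partitionGraph hs.isClique (by omega) with h | h <;>
    rw [hcard] at h <;> omega

theorem exists_isNClique_partitionGraph_succ {m r : ℕ} (ν : Nat.Partition m)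
    (hr : r ≤ #ν.parts.toFinset + 1) : ∃ s, (partitionGraph (m + 1)).IsNClique r s := by
  classical
  have hA : #(insert 0 ν.parts.toFinset) = #ν.parts.toFinset + 1 :=
    card_insert_of_notMem fun h => (ν.parts_pos (Multiset.mem_toFinset.1 h)).false
  let T := (insert 0 ν.parts.toFinset).attach.image fun k =>
    ν.addCell k.1 ((mem_insert.1 k.2).imp_right Multiset.mem_toFinset.1)
  have hT : #T = #ν.parts.toFinset + 1 := by
    rw [card_image_of_injective _ fun j k h => Subtype.ext (ν.addCell_injective h),
      card_attach, hA]
  have hstep : ∀ p ∈ T, stepDown p ν := by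
    simp only [T, mem_image]
    rintro _ ⟨k, -, rfl⟩
    exact ν.stepDown_addCell _
  obtain ⟨s, hsT, hs⟩ := exists_subset_card_eq (hr.trans hT.ge)
  exact ⟨s, fun p hp q hq hpq => ⟨hpq, ν, hstep p (hsT hp), hstep q (hsT hq)⟩, hs⟩

theorem exists_isNClique_partitionGraph_choose_two_add_one (r : ℕ) :
    ∃ s, (partitionGraph (r.choose 2 + 1)).IsNClique r s := by
  -- `ofMultiset (range r)` is the staircase `(r - 1, …, 1)`, with `r - 1` distinct parts
  have hsum : (Multiset.range r).sum = r.choose 2 := by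
    rw [Nat.choose_two_right, ← Finset.sum_range_id, Finset.sum_eq_multiset_sum, Finset.range_val,
      Multiset.map_id']
  have hparts : r ≤ #(Nat.Partition.ofMultiset (Multiset.range r)).parts.toFinset + 1 := by
    have := pred_card_le_card_erase (s := range r) (a := 0)
    simp only [card_range] at this
    simp [Nat.Partition.ofMultiset, Nat.Partition.ofSums, filter_ne']
    omega
  rw [← hsum]
  exact exists_isNClique_partitionGraph_succ (r := r)
    (Nat.Partition.ofMultiset (Multiset.range r)) hparts

lemma cliqueCount_eq_zero_iff {n r : ℕ} :
    cliqueCount n r = 0 ↔ (partitionGraph n).CliqueFree r := by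
  rw [cliqueCount, Set.ncard_eq_zero (Set.toFinite _), Set.eq_empty_iff_forall_notMem]
  rfl

lemma cliqueCount_pos_iff {n r : ℕ} :
    0 < cliqueCount n r ↔ ∃ s, (partitionGraph n).IsNClique r s := by
  rw [cliqueCount, Set.ncard_pos (Set.toFinite _)]
  rfl

theorem cliqueCount_choose_two_eq_zero {r : ℕ} (hr : 3 ≤ r) : cliqueCount (r.choose 2) r = 0 :=
  cliqueCount_eq_zero_iff.2 (cliqueFree_partitionGraph_choose_two hr)

theorem cliqueCount_choose_two_add_one_pos (r : ℕ) : 0 < cliqueCount (r.choose 2 + 1) r :=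
  cliqueCount_pos_iff.2 (exists_isNClique_partitionGraph_choose_two_add_one r)

theorem stmt9 :
    (cliqueCount 28 8 = 0 ∧ 0 < cliqueCount 29 8) ∧
    (cliqueCount 36 9 = 0 ∧ 0 < cliqueCount 37 9) ∧
    (cliqueCount 45 10 = 0 ∧ 0 < cliqueCount 46 10) ∧
    (cliqueCount 55 11 = 0 ∧ 0 < cliqueCount 56 11) :=
  ⟨⟨cliqueCount_choose_two_eq_zero (r := 8) (by norm_num), cliqueCount_choose_two_add_one_pos 8⟩,
    ⟨cliqueCount_choose_two_eq_zero (r := 9) (by norm_num), cliqueCount_choose_two_add_one_pos 9⟩,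
    ⟨cliqueCount_choose_two_eq_zero (r := 10) (by norm_num), cliqueCount_choose_two_add_one_pos 10⟩,
    ⟨cliqueCount_choose_two_eq_zero (r := 11) (by norm_num), cliqueCount_choose_two_add_one_pos 11⟩⟩
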